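/- Let V be a vertex algebra and W a V-module such that W = C_2(W). Then E_n(W) = C_{n+2}(W) = W for all n ≥ 0. -/

import Mathlib

open scoped DirectSum

noncomputable section


/-- Integer binomial coefficient `C(m, i)` for `m : ℤ`, `i : ℕ`. -/
def intBinom (m : ℤ) (i : ℕ) : ℤ :=
  (∏ j ∈ Finset.range i, (m - (j : ℤ))) / (i.factorial : ℤ)

/-- A vertex algebra over `ℂ`: a complex vector space `V` with a vacuum vector and a
linear state-field correspondence `Y`, `Y(v,x) = ∑ₙ vₙ x^{-n-1}`, satisfying
truncation, vacuum and creation properties, and Borcherds' commutator and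
iterate formulas. -/
structure VertexAlgebra (V : Type*) [AddCommGroup V] [Module ℂ V] where
  /-- the coefficients of vertex operators: `Y u n v = uₙ v`. -/
  Y : V →ₗ[ℂ] ℤ → Module.End ℂ V
  /-- the vacuum vector `𝟏`. -/
  vac : V
  trunc : ∀ u v : V, ∃ N : ℕ, ∀ n : ℤ, (N : ℤ) ≤ n → Y u n v = 0
  vac_act : ∀ (n : ℤ) (v : V), Y vac n v = if n = -1 then v else 0
  create : ∀ u : V, Y u (-1) vac = u
  create_nonneg : ∀ (u : V) (n : ℤ), 0 ≤ n → Y u n vac = 0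
  commutator : ∀ (u v w : V) (m n : ℤ),
    Y u m (Y v n w) - Y v n (Y u m w)
      = ∑ᶠ i : ℕ, intBinom m i • Y (Y u i v) (m + n - i) w
  iterate : ∀ (u v w : V) (m n : ℤ),
    Y (Y u m v) n w
      = ∑ᶠ i : ℕ, ((-1 : ℤ) ^ i * intBinom m i) •
          (Y u (m - i) (Y v (n + i) w)
            - ((((-1 : ℤˣ) ^ m : ℤˣ) : ℤ) • Y v (m + n - i) (Y u i w)))

/-- A module for a vertex algebra. -/
structure VAModule {V : Type*} [AddCommGroup V] [Module ℂ V] (va : VertexAlgebra V)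
    (W : Type*) [AddCommGroup W] [Module ℂ W] where
  /-- the action `act v n w = vₙ w`. -/
  act : V →ₗ[ℂ] ℤ → Module.End ℂ W
  trunc : ∀ (v : V) (w : W), ∃ N : ℕ, ∀ n : ℤ, (N : ℤ) ≤ n → act v n w = 0
  vac_act : ∀ (n : ℤ) (w : W), act va.vac n w = if n = -1 then w else 0
  commutator : ∀ (u v : V) (w : W) (m n : ℤ),
    act u m (act v n w) - act v n (act u m w)
      = ∑ᶠ i : ℕ, intBinom m i • act (va.Y u i v) (m + n - i) w
  iterate : ∀ (u v : V) (w : W) (m n : ℤ),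
    act (va.Y u m v) n w
      = ∑ᶠ i : ℕ, ((-1 : ℤ) ^ i * intBinom m i) •
          (act u (m - i) (act v (n + i) w)
            - ((((-1 : ℤˣ) ^ m : ℤˣ) : ℤ) • act v (m + n - i) (act u i w)))

variable {V : Type*} [AddCommGroup V] [Module ℂ V]

/-- The adjoint module of a vertex algebra. -/
def VertexAlgebra.adjoint (va : VertexAlgebra V) : VAModule va V where
  act := va.Y
  trunc := va.trunc
  vac_act := va.vac_act
  commutator := va.commutator
  iterate := va.iterate

variable {W : Type*} [AddCommGroup W] [Module ℂ W]

/-- `Efilt M n = E_n(W)`: the subspace of `W` spanned by the vectors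
`u⁽¹⁾_{-1-k₁} ⋯ u⁽ʳ⁾_{-1-k_r} w` for `r ≥ 1`, `u⁽ⁱ⁾ ∈ V`, `w ∈ W`, `kᵢ ≥ 0`,
`k₁ + ⋯ + k_r ≥ n`. -/
def Efilt {va : VertexAlgebra V} (M : VAModule va W) (n : ℤ) : Submodule ℂ W :=
  Submodule.span ℂ {x : W | ∃ (L : List (V × ℕ)) (w : W), L ≠ [] ∧
    n ≤ (L.map fun p => ((p.2 : ℤ))).sum ∧
    x = L.foldr (fun p acc => M.act p.1 (-1 - (p.2 : ℤ)) acc) w}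

/-- `Cfilt M n = C_n(W)`: the subspace of `W` spanned by the vectors `v_{-n} w`. -/
def Cfilt {va : VertexAlgebra V} (M : VAModule va W) (n : ℕ) : Submodule ℂ W :=
  Submodule.span ℂ {x : W | ∃ (v : V) (w : W), x = M.act v (-(n : ℤ)) w}



section AuxLemmas

private lemma intBinom_one' (m : ℤ) : intBinom m 1 = m := by
  simp [intBinom]

private lemma prod_neg_two' (i : ℕ) :
    (∏ j ∈ Finset.range i, ((-2 : ℤ) - (j : ℤ))) = (-1) ^ i * ((i + 1).factorial : ℤ) := by
  induction i with
  | zero => simp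
  | succ k ih =>
    rw [Finset.prod_range_succ, ih, Nat.factorial_succ (k + 1)]
    push_cast
    ring

private lemma intBinom_neg_two' (i : ℕ) : intBinom (-2) i = (-1) ^ i * ((i : ℤ) + 1) := by
  have h : (∏ j ∈ Finset.range i, ((-2 : ℤ) - (j : ℤ)))
      = ((-1) ^ i * ((i : ℤ) + 1)) * (i.factorial : ℤ) := by
    rw [prod_neg_two', Nat.factorial_succ]
    push_cast
    ring
  rw [intBinom, h, Int.mul_ediv_cancel]
  exact_mod_cast i.factorial_ne_zero

private lemma unit_neg_two' : ((((-1 : ℤˣ) ^ (-2 : ℤ) : ℤˣ) : ℤ)) = 1 := by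
  norm_num

variable {va : VertexAlgebra V} (M : VAModule va W)

private lemma finsum_mem_submodule' {α : Type*} {g : α → W} {p : Submodule ℂ W}
    (h : ∀ i, g i ∈ p) : (∑ᶠ i, g i) ∈ p := by
  by_cases hf : (Function.support g).Finite
  · rw [finsum_eq_sum g hf]
    exact Submodule.sum_mem _ fun i _ => h i
  · rw [finsum_of_infinite_support hf]
    exact p.zero_mem

private lemma zsmul_mem_submodule' {x : W} {p : Submodule ℂ W} (h : x ∈ p) (c : ℤ) :
    c • x ∈ p := by
  rw [← Int.cast_smul_eq_zsmul ℂ]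
  exact Submodule.smul_mem _ _ h

private lemma key_extract' {g : ℕ → W} {p : Submodule ℂ W}
    (htot : (∑ᶠ i, g i) ∈ p) {s : Finset ℕ} (h1 : (1 : ℕ) ∈ s)
    (hsupp : Function.support g ⊆ ↑s) (hmem : ∀ i : ℕ, i ≠ 1 → g i ∈ p) :
    g 1 ∈ p := by
  rw [finsum_eq_finset_sum_of_support_subset g hsupp] at htot
  rw [← Finset.add_sum_erase s g h1] at htot
  have h2 : (∑ i ∈ s.erase 1, g i) ∈ p :=
    Submodule.sum_mem _ fun i hi => hmem i (Finset.ne_of_mem_erase hi)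
  have h3 : g 1 = (g 1 + ∑ i ∈ s.erase 1, g i) - ∑ i ∈ s.erase 1, g i := by abel
  rw [h3]
  exact Submodule.sub_mem _ htot h2

/-- In any module, `(Tv)ₙ w = -n • v_{n-1} w` where `Tv = v₋₂𝟏`. -/
private lemma Tmod' (e : V) (n : ℤ) (w : W) :
    M.act (va.Y e (-2) va.vac) n w = (-n) • M.act e (n - 1) w := by
  rw [M.iterate e va.vac w (-2) n]
  rcases lt_trichotomy n 0 with hn | hn | hn
  · -- n < 0 : only the term i = (-1-n).toNat survives
    rw [finsum_eq_single _ (-1 - n).toNat ?_]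
    · have ha : ((-1 - n).toNat : ℤ) = -1 - n := Int.toNat_of_nonneg (by omega)
      rw [M.vac_act, M.vac_act, if_pos (by omega), if_neg (by omega), smul_zero, sub_zero,
        intBinom_neg_two']
      have hidx : (-2 : ℤ) - ((-1 - n).toNat : ℤ) = n - 1 := by omega
      rw [hidx]
      have hc : ((-1 : ℤ) ^ (-1 - n).toNat * ((-1 : ℤ) ^ (-1 - n).toNat
          * (((-1 - n).toNat : ℤ) + 1))) = -n := by
        have h2 : ((-1 : ℤ) ^ (-1 - n).toNat * (-1 : ℤ) ^ (-1 - n).toNat) = 1 := by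
          rw [← mul_pow]
          norm_num
        calc ((-1 : ℤ) ^ (-1 - n).toNat * ((-1 : ℤ) ^ (-1 - n).toNat
            * (((-1 - n).toNat : ℤ) + 1)))
            = ((-1 : ℤ) ^ (-1 - n).toNat * (-1 : ℤ) ^ (-1 - n).toNat)
              * (((-1 - n).toNat : ℤ) + 1) := by ring
          _ = -n := by rw [h2]; omega
      rw [hc]
    · intro i hi
      have hi' : (i : ℤ) ≠ -1 - n := fun hc => hi (by omega)
      rw [M.vac_act, M.vac_act, if_neg (by omega), if_neg (by omega)]
      simp
  · -- n = 0 : all terms vanish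
    subst hn
    rw [finsum_eq_zero_of_forall_eq_zero ?_]
    · simp
    · intro i
      rw [M.vac_act, M.vac_act, if_neg (by omega), if_neg (by omega)]
      simp
  · -- n > 0 : only the term i = (n-1).toNat survives
    rw [finsum_eq_single _ (n - 1).toNat ?_]
    · have ha : ((n - 1).toNat : ℤ) = n - 1 := Int.toNat_of_nonneg (by omega)
      rw [M.vac_act, M.vac_act, if_neg (by omega), if_pos (by omega), intBinom_neg_two',
        unit_neg_two', one_smul, map_zero, zero_sub, ha, smul_neg]
      have hc : ((-1 : ℤ) ^ (n - 1).toNat * ((-1 : ℤ) ^ (n - 1).toNat * (n - 1 + 1))) = n := by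
        have h2 : ((-1 : ℤ) ^ (n - 1).toNat * (-1 : ℤ) ^ (n - 1).toNat) = 1 := by
          rw [← mul_pow]
          norm_num
        calc ((-1 : ℤ) ^ (n - 1).toNat * ((-1 : ℤ) ^ (n - 1).toNat * (n - 1 + 1)))
            = ((-1 : ℤ) ^ (n - 1).toNat * (-1 : ℤ) ^ (n - 1).toNat) * (n - 1 + 1) := by ring
          _ = n := by rw [h2]; ring
      rw [hc, ← neg_smul]
    · intro i hi
      have hi' : (i : ℤ) ≠ n - 1 := fun hc => hi (by omega)
      rw [M.vac_act, M.vac_act, if_neg (by omega), if_neg (by omega)]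
      simp

private lemma genC' (k : ℕ) (v : V) (w : W) : M.act v (-(k : ℤ)) w ∈ Cfilt M k :=
  Submodule.subset_span ⟨v, w, rfl⟩

private lemma descent' (k : ℕ) (hk : 1 ≤ k) :
    ∀ m : ℤ, (k : ℤ) ≤ m → ∀ (v : V) (w : W), M.act v (-m) w ∈ Cfilt M k := by
  refine Int.le_induction ?_ ?_
  · intro v w
    exact genC' M k v w
  · intro p hp ih v w
    have hT := Tmod' M v (-p) w
    have h1 : -p - 1 = -(p + 1) := by ring
    rw [h1, neg_neg] at hT
    have h2 : p • M.act v (-(p + 1)) w ∈ Cfilt M k := by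
      rw [← hT]
      exact ih _ w
    have hp0 : (p : ℂ) ≠ 0 := by
      have hpz : p ≠ 0 := by omega
      exact_mod_cast hpz
    have h3 : M.act v (-(p + 1)) w = ((p : ℂ))⁻¹ • ((p : ℂ) • M.act v (-(p + 1)) w) := by
      rw [smul_smul, inv_mul_cancel₀ hp0, one_smul]
    rw [h3]
    apply Submodule.smul_mem
    rw [Int.cast_smul_eq_zsmul]
    exact h2

private lemma deep_mem' (k : ℕ) (hk : 1 ≤ k) (p : ℤ) (hp : p ≤ -(k : ℤ)) (v : V) (w : W) :
    M.act v p w ∈ Cfilt M k := by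
  have h := descent' M k hk (-p) (by omega) v w
  rwa [neg_neg] at h

private lemma comm_mem' (k : ℕ) (hk : 1 ≤ k) (m n : ℤ) (h : m + n ≤ -(k : ℤ))
    (e f : V) (d : W) :
    M.act e m (M.act f n d) - M.act f n (M.act e m d) ∈ Cfilt M k := by
  rw [M.commutator]
  apply finsum_mem_submodule'
  intro i
  apply zsmul_mem_submodule'
  exact deep_mem' M k hk _ (by omega) _ d

/-- The key identity: `e₋ₖ f₋ₖ d ∈ C_{K+1}` for `K ≥ 2`. -/
private lemma main_mem' (K : ℕ) (hK : 2 ≤ K) (e f : V) (d : W) :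
    M.act e (-(K : ℤ)) (M.act f (-(K : ℤ)) d) ∈ Cfilt M (K + 1) := by
  have hK1 : (1 : ℕ) ≤ K + 1 := by omega
  obtain ⟨N₁, hN₁⟩ := M.trunc f d
  obtain ⟨N₂, hN₂⟩ := M.trunc e d
  have hiter := M.iterate e f d (1 - (K : ℤ)) (-((K : ℤ) + 1))
  set g : ℕ → W := fun i => ((-1 : ℤ) ^ i * intBinom (1 - (K : ℤ)) i) •
      (M.act e (1 - (K : ℤ) - (i : ℤ)) (M.act f (-((K : ℤ) + 1) + (i : ℤ)) d)
        - (((-1 : ℤˣ) ^ (1 - (K : ℤ)) : ℤˣ) : ℤ)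
          • M.act f (1 - (K : ℤ) + -((K : ℤ) + 1) - (i : ℤ)) (M.act e (i : ℤ) d)) with hgdef
  have hLHS : (∑ᶠ i, g i) ∈ Cfilt M (K + 1) := by
    rw [← hiter]
    have hcast : -((K : ℤ) + 1) = -(((K + 1 : ℕ)) : ℤ) := by push_cast; ring
    rw [hcast]
    exact genC' M (K + 1) _ d
  have hsupp : Function.support g ⊆ ↑(Finset.range (N₁ + N₂ + K + 2) ∪ {1}) := by
    intro i hi
    simp only [Finset.coe_union, Finset.coe_range, Finset.coe_singleton, Set.mem_union,
      Set.mem_Iio, Set.mem_singleton_iff]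
    by_contra hcon
    push_neg at hcon
    refine Function.mem_support.mp hi ?_
    rw [hgdef]
    simp only []
    rw [hN₁ _ (by omega), hN₂ _ (by omega)]
    simp
  have hmem : ∀ i : ℕ, i ≠ 1 → g i ∈ Cfilt M (K + 1) := by
    intro i hi
    rw [hgdef]
    simp only []
    apply zsmul_mem_submodule'
    apply Submodule.sub_mem
    · rcases i with _ | _ | j
      · -- i = 0 : commute the two operators
        have hcm := comm_mem' M (K + 1) hK1 (1 - (K : ℤ) - ((0 : ℕ) : ℤ))
          (-((K : ℤ) + 1) + ((0 : ℕ) : ℤ)) (by push_cast; omega) e f d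
        have hsnd : M.act f (-((K : ℤ) + 1) + ((0 : ℕ) : ℤ))
            (M.act e (1 - (K : ℤ) - ((0 : ℕ) : ℤ)) d) ∈ Cfilt M (K + 1) :=
          deep_mem' M (K + 1) hK1 _ (by push_cast; omega) f _
        have hsum := Submodule.add_mem _ hcm hsnd
        rwa [sub_add_cancel] at hsum
      · exact absurd rfl hi
      · exact deep_mem' M (K + 1) hK1 _ (by push_cast; omega) e _
    · apply zsmul_mem_submodule'
      exact deep_mem' M (K + 1) hK1 _ (by push_cast; omega) f _
  have hg1 : g 1 ∈ Cfilt M (K + 1) :=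
    key_extract' hLHS (by simp) hsupp hmem
  rw [hgdef] at hg1
  simp only [] at hg1
  rw [intBinom_one'] at hg1
  have hcoef : ((-1 : ℤ) ^ 1 * (1 - (K : ℤ))) = (K : ℤ) - 1 := by ring
  rw [hcoef] at hg1
  have hy1 : ((((-1 : ℤˣ) ^ (1 - (K : ℤ)) : ℤˣ) : ℤ)
      • M.act f (1 - (K : ℤ) + -((K : ℤ) + 1) - ((1 : ℕ) : ℤ))
        (M.act e ((1 : ℕ) : ℤ) d)) ∈ Cfilt M (K + 1) := by
    apply zsmul_mem_submodule'
    exact deep_mem' M (K + 1) hK1 _ (by push_cast; omega) f _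
  have hKz : ((((K : ℤ) - 1 : ℤ) : ℂ)) ≠ 0 := by
    have hz : ((K : ℤ) - 1) ≠ 0 := by omega
    exact_mod_cast hz
  have hdiff : (M.act e (1 - (K : ℤ) - ((1 : ℕ) : ℤ))
        (M.act f (-((K : ℤ) + 1) + ((1 : ℕ) : ℤ)) d)
      - ((((-1 : ℤˣ) ^ (1 - (K : ℤ)) : ℤˣ) : ℤ)
        • M.act f (1 - (K : ℤ) + -((K : ℤ) + 1) - ((1 : ℕ) : ℤ))
          (M.act e ((1 : ℕ) : ℤ) d))) ∈ Cfilt M (K + 1) := by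
    rw [← Int.cast_smul_eq_zsmul ℂ] at hg1
    have h5 := Submodule.smul_mem (Cfilt M (K + 1)) ((((K : ℤ) - 1 : ℤ) : ℂ))⁻¹ hg1
    rw [smul_smul, inv_mul_cancel₀ hKz, one_smul] at h5
    exact h5
  have hfinal := Submodule.add_mem _ hdiff hy1
  rw [sub_add_cancel] at hfinal
  have hi1 : (1 : ℤ) - (K : ℤ) - ((1 : ℕ) : ℤ) = -(K : ℤ) := by push_cast; ring
  have hi2 : -((K : ℤ) + 1) + ((1 : ℕ) : ℤ) = -(K : ℤ) := by push_cast; ring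
  rw [hi1, hi2] at hfinal
  exact hfinal

private lemma step' (K : ℕ) (hK : 2 ≤ K) (hC : Cfilt M K = ⊤) :
    Cfilt M (K + 1) = ⊤ := by
  rw [eq_top_iff, ← hC]
  rw [Cfilt, Submodule.span_le]
  rintro x ⟨e, b, rfl⟩
  have hb : b ∈ Cfilt M K := by rw [hC]; trivial
  have hmap : M.act e (-(K : ℤ)) b ∈ Submodule.map (M.act e (-(K : ℤ))) (Cfilt M K) :=
    ⟨b, hb, rfl⟩
  have hle : Submodule.map (M.act e (-(K : ℤ))) (Cfilt M K) ≤ Cfilt M (K + 1) := by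
    rw [Cfilt, Submodule.map_span, Submodule.span_le]
    rintro y ⟨x, ⟨f, d, rfl⟩, rfl⟩
    exact main_mem' M K hK e f d
  exact hle hmap

end AuxLemmas

/-- **Lemma 3.11 (ltrivial).** Let `V` be a vertex algebra and `W` a `V`-module
with `W = C₂(W)`. Then `E_n(W) = C_{n+2}(W) = W` for all `n ≥ 0`. -/
theorem stmt13 {V : Type*} [AddCommGroup V] [Module ℂ V] {W : Type*} [AddCommGroup W]
    [Module ℂ W] (va : VertexAlgebra V) (M : VAModule va W) (h : Cfilt M 2 = ⊤) :
    ∀ n : ℕ, Efilt M (n : ℤ) = ⊤ ∧ Cfilt M (n + 2) = ⊤ := by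
  have key : ∀ n : ℕ, Cfilt M (n + 2) = ⊤ := by
    intro n
    induction n with
    | zero => exact h
    | succ k ih =>
      have hstep := step' M (k + 2) (by omega) ih
      have hEq : (k + 2) + 1 = (k + 1) + 2 := by omega
      rwa [hEq] at hstep
  intro n
  refine ⟨?_, key n⟩
  rw [eq_top_iff, ← key n, Cfilt, Submodule.span_le]
  rintro x ⟨v, w, rfl⟩
  apply Submodule.subset_span
  refine ⟨[(v, n + 1)], w, by simp, ?_, ?_⟩
  · simp
  · simp only [List.foldr]
    congr 1
    push_cast
    ring_nf


end
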